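/- Let n = 4. The element X_{(6,2)} of B_{4,ℤ} does not lie in the right ℤ[S_8]-submodule of B_{4,ℤ} generated by X_{(4,4)}; that is, there is no z ∈ ℤ[S_8] with X_{(4,4)} ∗ z = X_{(6,2)} (the action ∗ being extended ℤ-linearly to ℤ[S_8]). -/

import Mathlib

open scoped BigOperators

/-- Brauer `n`-diagrams: fixed-point-free involutions of `{0, ..., 2n-1}`
(the point `k` stands for the vertex labeled `k+1`). -/
def BD (n : ℕ) : Type := {D : Equiv.Perm (Fin (2*n)) // D * D = 1 ∧ ∀ x, D x ≠ x}

instance (n : ℕ) : Finite (BD n) := Subtype.finite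

noncomputable instance (n : ℕ) : Fintype (BD n) := Fintype.ofFinite _

noncomputable instance (n : ℕ) : DecidableEq (BD n) := Classical.decEq _

/-- The conjugation (right) action of `S_{2n}` on Brauer diagrams: `D ∗ w = w⁻¹ D w`. -/
def conjBD {n : ℕ} (D : BD n) (w : Equiv.Perm (Fin (2*n))) : BD n :=
  ⟨w⁻¹ * D.1 * w,
   by
     have h := D.2.1
     have h2 : (w⁻¹ * D.1 * w) * (w⁻¹ * D.1 * w) = w⁻¹ * (D.1 * D.1) * w := by group
     rw [h2, h, mul_one, inv_mul_cancel],
   fun x hx => D.2.2 (w x) (by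
     have h1 : (w⁻¹ * D.1 * w) x = w⁻¹ (D.1 (w x)) := rfl
     rw [h1] at hx
     have h2 := congrArg w hx
     simpa using h2)⟩

/-- The right action of a permutation on the free module spanned by Brauer diagrams. -/
noncomputable def astw {n : ℕ} {R : Type*} [AddCommMonoid R]
    (v : BD n →₀ R) (w : Equiv.Perm (Fin (2*n))) : BD n →₀ R :=
  Finsupp.mapDomain (fun D => conjBD D w) v

/-- The right action extended linearly to the group algebra `R[S_{2n}]`. -/
noncomputable def astMA {n : ℕ} {R : Type*} [CommRing R]
    (v : BD n →₀ R) (z : MonoidAlgebra R (Equiv.Perm (Fin (2*n)))) : BD n →₀ R :=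
  z.coeff.sum fun w c => c • astw v w

open Classical in
/-- Sum of all Brauer diagrams satisfying a predicate. -/
noncomputable def indSum (R : Type*) [CommRing R] {n : ℕ} (P : BD n → Prop) : BD n →₀ R :=
  ∑ D : BD n, if P D then Finsupp.single D 1 else 0

open Classical in
noncomputable def sumPerm {n : ℕ} {M : Type*} [AddCommMonoid M]
    (P : Equiv.Perm (Fin (2*n)) → Prop) (F : Equiv.Perm (Fin (2*n)) → M) : M :=
  ∑ g : Equiv.Perm (Fin (2*n)), if P g then F g else 0

/-- `psum lam i = lam 0 + ... + lam (i-1)`, the partial sums of a composition. -/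
def psum (lam : ℕ → ℕ) (i : ℕ) : ℕ := ∑ k ∈ Finset.range i, lam k

/-- `lam` is a partition of `2n` (0-indexed parts). -/
def IsPartitionOf2n (n : ℕ) (lam : ℕ → ℕ) : Prop :=
  (∀ i j, i ≤ j → lam j ≤ lam i) ∧ (∀ i, 2*n ≤ i → lam i = 0) ∧ psum lam (2*n) = 2*n

/-- `lam ∈ 2P_n`: a partition of `2n` all of whose parts are even. -/
def IsEvenPartition (n : ℕ) (lam : ℕ → ℕ) : Prop :=
  IsPartitionOf2n n lam ∧ ∀ i, Even (lam i)

/-- Dominance order `lam ⊴ nu`. -/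
def Dominates (lam nu : ℕ → ℕ) : Prop := ∀ k, psum lam k ≤ psum nu k

/-- `D` maps each block `B_i = {psum lam i, ..., psum lam (i+1) - 1}` to itself. -/
def PreservesBlocks (n : ℕ) (lam : ℕ → ℕ) (D : BD n) : Prop :=
  ∀ (p : Fin (2*n)) (i : ℕ), psum lam i ≤ (p : ℕ) → (p : ℕ) < psum lam (i+1) →
    psum lam i ≤ ((D.1 p : Fin (2*n)) : ℕ) ∧ ((D.1 p : Fin (2*n)) : ℕ) < psum lam (i+1)

/-- `X_lam`: the sum of all Brauer diagrams preserving the blocks of `lam`. -/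
noncomputable def Xelt (R : Type*) [CommRing R] (n : ℕ) (lam : ℕ → ℕ) : BD n →₀ R :=
  indSum R (PreservesBlocks n lam)

/-- `g` encodes a standard `nu`-tableau `t` via `t(c) = g(pos c) + 1`, where `pos c`
is the (0-indexed) row-reading position of the node `c`; i.e. `g = d(t)`. -/
def IsStdOf (n : ℕ) (nu : ℕ → ℕ) (g : Equiv.Perm (Fin (2*n))) : Prop :=
  (∀ (i j : ℕ) (a b : Fin (2*n)), (a : ℕ) = psum nu i + j → (b : ℕ) = psum nu i + j + 1 →
      j + 1 < nu i → ((g a : Fin (2*n)) : ℕ) < ((g b : Fin (2*n)) : ℕ)) ∧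
  (∀ (i j : ℕ) (a b : Fin (2*n)), (a : ℕ) = psum nu i + j → (b : ℕ) = psum nu (i+1) + j →
      j < nu (i+1) → ((g a : Fin (2*n)) : ℕ) < ((g b : Fin (2*n)) : ℕ))

/-- `X_{nu,t} = X_nu ∗ d(t)`. -/
noncomputable def XNuT (R : Type*) [CommRing R] (n : ℕ) (nu : ℕ → ℕ)
    (g : Equiv.Perm (Fin (2*n))) : BD n →₀ R :=
  astw (Xelt R n nu) g

/-- `M_R^lam`: the span of the `X_{nu,t}` for `nu ∈ 2P_n` with `lam ⊴ nu` and `t` standard. -/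
noncomputable def Mspan (R : Type*) [CommRing R] (n : ℕ) (lam : ℕ → ℕ) :
    Submodule R (BD n →₀ R) :=
  Submodule.span R {v | ∃ nu g, IsEvenPartition n nu ∧ Dominates lam nu ∧
    IsStdOf n nu g ∧ v = XNuT R n nu g}

/-- `M_R^{▷lam}`: the span of the `X_{nu,t}` for `nu ∈ 2P_n` with `lam ⊴ nu`, `lam ≠ nu`. -/
noncomputable def MspanStrict (R : Type*) [CommRing R] (n : ℕ) (lam : ℕ → ℕ) :
    Submodule R (BD n →₀ R) :=
  Submodule.span R {v | ∃ nu g, IsEvenPartition n nu ∧ Dominates lam nu ∧ lam ≠ nu ∧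
    IsStdOf n nu g ∧ v = XNuT R n nu g}

/-- The (0-indexed) row of `t^mu` containing the (0-indexed) entry `a`. -/
def rowOf (n : ℕ) (mu : ℕ → ℕ) (a : ℕ) : ℕ :=
  ((Finset.range (2*n)).filter (fun i => psum mu (i+1) ≤ a)).card

/-- The `j`-th part (0-indexed) of the conjugate partition of `mu`. -/
def conjPart (n : ℕ) (mu : ℕ → ℕ) (j : ℕ) : ℕ :=
  ((Finset.range (2*n)).filter (fun i => j < mu i)).card

/-- The conjugate partition. -/
def conjFun (n : ℕ) (mu : ℕ → ℕ) : ℕ → ℕ := fun j => conjPart n mu j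

/-- The (0-indexed) column-reading position of the node `(i,j)` of `mu`. -/
def colpos (n : ℕ) (mu : ℕ → ℕ) (i j : ℕ) : ℕ := (∑ k ∈ Finset.range j, conjPart n mu k) + i

/-- `w = w_mu`, the permutation sending the entry of `t^mu` at each node to the entry of
`t_mu` (column-reading tableau) at that node. -/
def IsColReadingPerm (n : ℕ) (mu : ℕ → ℕ) (w : Equiv.Perm (Fin (2*n))) : Prop :=
  ∀ (i j : ℕ) (a b : Fin (2*n)), (a : ℕ) = psum mu i + j → (b : ℕ) = colpos n mu i j →
    j < mu i → w a = b

/-- Membership in the Young subgroup `S_mu` (row stabilizer of `t^mu`). -/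
def InYoung (n : ℕ) (mu : ℕ → ℕ) (w : Equiv.Perm (Fin (2*n))) : Prop :=
  ∀ p : Fin (2*n), rowOf n mu ((w p : Fin (2*n)) : ℕ) = rowOf n mu (p : ℕ)

/-- `x_mu = Σ_{w ∈ S_mu} w`. -/
noncomputable def xElt (R : Type*) [CommRing R] (n : ℕ) (mu : ℕ → ℕ) :
    MonoidAlgebra R (Equiv.Perm (Fin (2*n))) :=
  sumPerm (InYoung n mu) (fun w => MonoidAlgebra.single w 1)

/-- `y_mu = Σ_{w ∈ S_mu} sgn(w)·w`. -/
noncomputable def yElt (R : Type*) [CommRing R] (n : ℕ) (mu : ℕ → ℕ) :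
    MonoidAlgebra R (Equiv.Perm (Fin (2*n))) :=
  sumPerm (InYoung n mu) (fun w => MonoidAlgebra.single w (((Equiv.Perm.sign w : ℤˣ) : ℤ) : R))

/-- The generator `y_{mu'} · w_{mu'} · x_mu` of the Specht module, where `wc = w_{mu'}`. -/
noncomputable def spechtGen (R : Type*) [CommRing R] (n : ℕ) (mu : ℕ → ℕ)
    (wc : Equiv.Perm (Fin (2*n))) : MonoidAlgebra R (Equiv.Perm (Fin (2*n))) :=
  yElt R n (conjFun n mu) * MonoidAlgebra.single wc 1 * xElt R n mu

/-- The Specht module `S^mu = y_{mu'} w_{mu'} x_mu · R[S_{2n}]` as a right ideal. -/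
noncomputable def SpechtMod (R : Type*) [CommRing R] (n : ℕ) (mu : ℕ → ℕ)
    (wc : Equiv.Perm (Fin (2*n))) : Submodule R (MonoidAlgebra R (Equiv.Perm (Fin (2*n)))) :=
  LinearMap.range (LinearMap.mulLeft R (spechtGen R n mu wc))

/-- Right multiplication by `w` on the (integral) Specht module. -/
noncomputable def spechtRm (n : ℕ) (mu : ℕ → ℕ) (wc w : Equiv.Perm (Fin (2*n))) :
    ↥(SpechtMod ℤ n mu wc) →ₗ[ℤ] ↥(SpechtMod ℤ n mu wc) :=
  LinearMap.restrict (LinearMap.mulRight ℤ (MonoidAlgebra.single w 1))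
    (by
      rintro x ⟨u, rfl⟩
      exact ⟨u * MonoidAlgebra.single w 1, by
        simp only [LinearMap.mulLeft_apply, LinearMap.mulRight_apply, mul_assoc]⟩)

/-- Base change `B_{n,ℤ} → B_{n,R}`. -/
noncomputable def bcast (R : Type*) [CommRing R] (n : ℕ) : (BD n →₀ ℤ) →ₗ[ℤ] (BD n →₀ R) :=
  Finsupp.mapRange.linearMap (Int.castAddHom R).toIntLinearMap

/-- The canonical map `R ⊗_ℤ M_ℤ^lam → B_{n,R}` (with image `M_R^lam`). -/
noncomputable def canMap (R : Type*) [CommRing R] (n : ℕ) (lam : ℕ → ℕ) :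
    TensorProduct ℤ R ↥(Mspan ℤ n lam) →ₗ[ℤ] (BD n →₀ R) :=
  TensorProduct.lift
    (LinearMap.mk₂ ℤ (fun (r : R) (x : ↥(Mspan ℤ n lam)) => r • bcast R n (x : BD n →₀ ℤ))
      (fun r r' x => by rw [add_smul])
      (fun c r x => by rw [smul_assoc])
      (fun r x y => by rw [Submodule.coe_add, map_add, smul_add])
      (fun c r x => by rw [Submodule.coe_smul, map_smul, smul_comm]))

/-- `D` as a function on natural numbers (identity outside `{0,...,2n-1}`). -/
noncomputable def toFun2n {n : ℕ} (D : BD n) : ℕ → ℕ := fun a =>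
  if h : a < 2*n then ((D.1 ⟨a, h⟩ : Fin (2*n)) : ℕ) else a

/-- The sorted list of left endpoints (as 0-indexed vertex numbers) of the bottom
horizontal edges of `D`; bottom vertex `c` is the point `2c+1`. -/
noncomputable def botLeftList (n : ℕ) (D : BD n) : List ℕ :=
  ((Finset.range n).filter
    (fun c => toFun2n D (2*c+1) % 2 = 1 ∧ 2*c+1 < toFun2n D (2*c+1))).sort (· ≤ ·)

/-- The permutation `π_D` (as a function on 0-indexed vertices): vertical edges are matched
top-to-bottom, and the `j`-th top horizontal edge (ordered by left endpoints) is matched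
to the `j`-th bottom horizontal edge, left endpoint to left endpoint. -/
noncomputable def piFun (n : ℕ) (D : BD n) : ℕ → ℕ := fun u =>
  if u < n then
    if toFun2n D (2*u) % 2 = 1 then (toFun2n D (2*u) - 1)/2
    else
      let a := min u (toFun2n D (2*u) / 2)
      let j := ((Finset.range n).filter
        (fun a' => toFun2n D (2*a') % 2 = 0 ∧ a' < toFun2n D (2*a') / 2 ∧ a' < a)).card
      let c := (botLeftList n D).getD j 0
      if u < toFun2n D (2*u) / 2 then c else (toFun2n D (2*c+1) - 1)/2
  else u

/-- `sgn(π_D)`, computed via the number of inversions of `π_D` on `{0,...,n-1}`. -/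
noncomputable def signPi (n : ℕ) (D : BD n) : ℤ :=
  (-1 : ℤ) ^ (((Finset.range n ×ˢ Finset.range n).filter
    (fun p => p.1 < p.2 ∧ piFun n D p.2 < piFun n D p.1)).card)

/-- `ε_{x,y}` on 0-indexed basis labels: `1` if `y = x'` and `x < y`, `-1` if `y = x'`
and `x > y`, `0` otherwise (here `x' = 2m-1-x`, i.e. `x + y = 2m - 1`). -/
def epsN (m : ℕ) (x y : ℕ) : ℤ :=
  if x + y = 2*m - 1 then (if x < y then 1 else -1) else 0

/-- The coefficient of `v_x ⊗ v_y` in `ω = Σ_{k=1}^m (v_{k'} ⊗ v_k - v_k ⊗ v_{k'})`. -/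
def omegaN (m : ℕ) (x y : ℕ) : ℤ :=
  if x + y = 2*m - 1 then (if y < x then 1 else -1) else 0

/-- The matrix coefficient of `φ(D)` between the input basis tensor `vin` (read at the top
row) and the output basis tensor `vout` (read at the bottom row):
`sgn(π_D) · Π_{top edges (a,b)} ε_{vin a, vin b} · Π_{vertical edges (u,w)} δ_{vin u, vout w}
· Π_{bottom edges (c,d)} (coefficient of v_{vout c} ⊗ v_{vout d} in ω)`. -/
noncomputable def phiCoef (m n : ℕ) (D : BD n) (vin vout : ℕ → ℕ) : ℤ :=
  signPi n D
  * ∏ p ∈ (Finset.range n ×ˢ Finset.range n).filter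
      (fun p => p.1 < p.2 ∧ toFun2n D (2*p.1) = 2*p.2), epsN m (vin p.1) (vin p.2)
  * ∏ p ∈ (Finset.range n ×ˢ Finset.range n).filter
      (fun p => toFun2n D (2*p.1) = 2*p.2+1), (if vout p.2 = vin p.1 then 1 else 0)
  * ∏ p ∈ (Finset.range n ×ˢ Finset.range n).filter
      (fun p => p.1 < p.2 ∧ toFun2n D (2*p.1+1) = 2*p.2+1), omegaN m (vout p.1) (vout p.2)

/-- Extend `f : Fin n → Fin m` to a function `ℕ → ℕ`. -/
def liftFin {n m : ℕ} (f : Fin n → Fin m) : ℕ → ℕ := fun t =>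
  if h : t < n then ((f ⟨t, h⟩ : Fin m) : ℕ) else 0

/-- The endomorphism `φ(D)` of the `n`-tensor space `V^{⊗n}`, `dim V = 2m`, realized on the
free module with basis the functions `Fin n → Fin (2m)` (basis tensors). -/
noncomputable def phiD (K : Type*) [CommRing K] (m n : ℕ) (D : BD n) :
    ((Fin n → Fin (2*m)) →₀ K) →ₗ[K] ((Fin n → Fin (2*m)) →₀ K) :=
  Finsupp.lsum K fun vin => LinearMap.toSpanSingleton K _
    (∑ vout : Fin n → Fin (2*m),
      Finsupp.single vout ((phiCoef m n D (liftFin vin) (liftFin vout) : ℤ) : K))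

/-- The linear extension `φ : B_{n,K} → End_K(V^{⊗n})`. -/
noncomputable def phiLin (K : Type*) [CommRing K] (m n : ℕ) :
    (BD n →₀ K) →ₗ[K]
      (((Fin n → Fin (2*m)) →₀ K) →ₗ[K] ((Fin n → Fin (2*m)) →₀ K)) :=
  Finsupp.lsum K fun D => LinearMap.toSpanSingleton K _ (phiD K m n D)

/-- Membership in `BD_n(a,b)` (0-indexed vertices; top vertex `u` is the point `2u`,
bottom vertex `u` is the point `2u+1`). -/
def memBDab (n a b : ℕ) (D : BD n) : Prop :=
  if b ≤ a then
    (∀ p, ((p % 2 = 0 ∧ p < 2*a) ∨ (p % 2 = 1 ∧ p < 2*b)) →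
        ((toFun2n D p % 2 = 0 ∧ toFun2n D p < 2*a) ∨
         (toFun2n D p % 2 = 1 ∧ toFun2n D p < 2*b))) ∧
    (∀ t, b + 2*t + 1 < a → toFun2n D (2*(b+2*t)+1) = 2*(b+2*t+1)+1) ∧
    (∀ u, a ≤ u → u < n → toFun2n D (2*u) = 2*u+1)
  else
    (∀ p, ((p % 2 = 0 ∧ p < 2*a) ∨ (p % 2 = 1 ∧ p < 2*b)) →
        ((toFun2n D p % 2 = 0 ∧ toFun2n D p < 2*a) ∨
         (toFun2n D p % 2 = 1 ∧ toFun2n D p < 2*b))) ∧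
    (∀ t, a + 2*t + 1 < b → toFun2n D (2*(a+2*t)) = 2*(a+2*t+1))  ∧
    (∀ u, b ≤ u → u < n → toFun2n D (2*u) = 2*u+1)

/-- The fixed-point-free involution `γ₀ = (1 2)(3 4)⋯(2n-1 2n)` (0-indexed: `2k ↔ 2k+1`). -/
def gamma0 (n : ℕ) : BD n :=
  ⟨⟨fun p => ⟨if (p : ℕ) % 2 = 0 then (p : ℕ) + 1 else (p : ℕ) - 1, by
      rcases p with ⟨v, hv⟩; dsimp only; split <;> omega⟩,
    fun p => ⟨if (p : ℕ) % 2 = 0 then (p : ℕ) + 1 else (p : ℕ) - 1, by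
      rcases p with ⟨v, hv⟩; dsimp only; split <;> omega⟩,
    fun p => by
      rcases p with ⟨v, hv⟩
      apply Fin.ext
      dsimp only
      split_ifs <;> omega,
    fun p => by
      rcases p with ⟨v, hv⟩
      apply Fin.ext
      dsimp only
      split_ifs <;> omega⟩,
   by
     apply Equiv.ext
     intro p
     rcases p with ⟨v, hv⟩
     apply Fin.ext
     show (if (if v % 2 = 0 then v + 1 else v - 1) % 2 = 0
        then (if v % 2 = 0 then v + 1 else v - 1) + 1
        else (if v % 2 = 0 then v + 1 else v - 1) - 1) = v
     split_ifs <;> omega,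
   fun p => by
     rcases p with ⟨v, hv⟩
     intro h
     have h1 : (if v % 2 = 0 then v + 1 else v - 1) = v := congrArg Fin.val h
     revert h1
     split_ifs <;> omega⟩

/-!
The coefficient sum `Finsupp.degree` on `B_{n,R}` is invariant under the conjugation action,
so `degree (X ∗ z) = degree z * degree X` for every `z ∈ R[S_{2n}]`. The degree of `X_λ` is the
number of fixed-point-free involutions preserving every block, i.e. `∏ (λ_i - 1)‼`. Hence
`degree X_{(4,4)} = 3 * 3 = 9` and `degree X_{(6,2)} = 15 * 1 = 15`, and `9 * degree z = 15`
has no integer solution.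
-/

open scoped Nat

namespace Equiv.Perm

variable {α : Type*}

def IsFixedPointFreeInvolution (f : Perm α) : Prop := f * f = 1 ∧ ∀ x, f x ≠ x

theorem isFixedPointFreeInvolution_iff {f : Perm α} :
    IsFixedPointFreeInvolution f ↔ ∀ x, f (f x) = x ∧ f x ≠ x := by
  simp only [IsFixedPointFreeInvolution, Perm.ext_iff, Perm.mul_apply, Perm.one_apply,
    forall_and]

theorem isFixedPointFreeInvolution_iff_cycleType [Fintype α] [DecidableEq α] {k : ℕ}
    (hα : Fintype.card α = 2 * k) {f : Perm α} :
    IsFixedPointFreeInvolution f ↔ f.cycleType = Multiset.replicate k 2 := by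
  have support_eq_univ : (∀ x, f x ≠ x) ↔ f.support = Finset.univ := by
    simp [Finset.eq_univ_iff_forall]
  constructor
  · rintro ⟨hsq, hfix⟩
    have hcycle : ∀ n ∈ f.cycleType, n = 2 := fun n hn =>
      le_antisymm (Nat.le_of_dvd two_pos ((dvd_of_mem_cycleType hn).trans
        (orderOf_dvd_of_pow_eq_one (by rwa [sq])))) (two_le_of_mem_cycleType hn)
    rw [Multiset.eq_replicate]
    refine ⟨?_, hcycle⟩
    have hsum := f.sum_cycleType
    rw [support_eq_univ.mp hfix, Finset.card_univ, hα,
      Multiset.eq_replicate_card.mpr hcycle, Multiset.sum_replicate, smul_eq_mul] at hsum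
    omega
  · intro hf
    refine ⟨?_, support_eq_univ.mpr ?_⟩
    · rw [← sq, ← orderOf_dvd_iff_pow_eq_one, ← lcm_cycleType, hf, Multiset.lcm_dvd]
      intro b hb
      rw [Multiset.eq_of_mem_replicate hb]
    · apply Finset.eq_univ_of_card
      rw [← sum_cycleType, hf, Multiset.sum_replicate, smul_eq_mul, hα, mul_comm]

theorem card_isFixedPointFreeInvolution [Finite α] {k : ℕ} (hα : Nat.card α = 2 * k) :
    Nat.card {f : Perm α // IsFixedPointFreeInvolution f} = (2 * k - 1)‼ := by
  classical
  have := Fintype.ofFinite α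
  rw [Nat.card_eq_fintype_card] at hα
  have hcount := card_of_cycleType_mul_eq α (Multiset.replicate k 2)
  rw [← Fintype.card_subtype, ← Nat.card_eq_fintype_card] at hcount
  simp_rw [← isFixedPointFreeInvolution_iff_cycleType hα] at hcount
  have hprod : ∏ m ∈ (Multiset.replicate k 2).toFinset,
      (Multiset.count m (Multiset.replicate k 2))! = k ! := by
    rcases eq_or_ne k 0 with rfl | hk
    · simp
    · simp [hk, Multiset.count_replicate_self]
  have hfact : (2 * k)! = (2 * k - 1)‼ * (2 ^ k * k !) := by
    rcases k with _ | j
    · simp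
    · rw [← Nat.doubleFactorial_two_mul, show 2 * (j + 1) = (2 * j + 1) + 1 by ring,
        Nat.factorial_eq_mul_doubleFactorial, mul_comm, Nat.add_sub_cancel]
  simp only [Multiset.sum_replicate, smul_eq_mul, Multiset.prod_replicate, hprod, hα,
    mul_comm k 2, Nat.sub_self, Nat.factorial_zero, one_mul, le_refl, true_and] at hcount
  rw [if_pos (fun a ha => (Multiset.eq_of_mem_replicate ha).ge), hfact] at hcount
  exact Nat.eq_of_mul_eq_mul_right (by positivity) hcount

theorem isFixedPointFreeInvolution_iff_subtypePerm {p : α → Prop} {f : Perm α}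
    (hf : ∀ x, p (f x) ↔ p x) :
    IsFixedPointFreeInvolution f ↔
      IsFixedPointFreeInvolution (f.subtypePerm hf) ∧
        IsFixedPointFreeInvolution
          (f.subtypePerm (p := fun x => ¬p x) fun x => not_congr (hf x)) := by
  simp only [isFixedPointFreeInvolution_iff, Subtype.forall, subtypePerm_apply, ne_eq,
    Subtype.mk.injEq]
  exact ⟨fun h => ⟨fun x _ => h x, fun x _ => h x⟩,
    fun h x => (em (p x)).elim (h.1 x) (h.2 x)⟩

def subtypeCongrEquiv (p : α → Prop) [DecidablePred p] :
    {f : Perm α // ∀ x, p (f x) ↔ p x} ≃ Perm {a // p a} × Perm {a // ¬p a} where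
  toFun f :=
    (f.1.subtypePerm f.2, f.1.subtypePerm (p := fun x => ¬p x) fun x => not_congr (f.2 x))
  invFun g := ⟨g.1.subtypeCongr g.2, fun x => by
    by_cases hx : p x
    · simpa only [subtypeCongr.left_apply _ _ hx, hx, iff_true] using (g.1 _).2
    · simpa only [subtypeCongr.right_apply _ _ hx, hx, iff_false] using (g.2 _).2⟩
  left_inv f := by
    ext x
    by_cases hx : p x <;> simp [hx]
  right_inv g := by
    ext x <;> simp [x.2]

theorem card_isFixedPointFreeInvolution_and_preserves (p : α → Prop) :
    Nat.card {f : Perm α // IsFixedPointFreeInvolution f ∧ ∀ x, p (f x) ↔ p x} =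
      Nat.card {g : Perm {a // p a} // IsFixedPointFreeInvolution g} *
        Nat.card {g : Perm {a // ¬p a} // IsFixedPointFreeInvolution g} := by
  classical
  rw [← Nat.card_prod, ← Nat.card_congr Equiv.subtypeProdEquivProd]
  exact Nat.card_congr <| (Equiv.subtypeEquivRight fun _ => and_comm).trans <|
    (Equiv.subtypeSubtypeEquivSubtypeInter _ _).symm.trans <|
      (subtypeCongrEquiv p).subtypeEquiv fun f => isFixedPointFreeInvolution_iff_subtypePerm f.2

end Equiv.Perm

section BrauerDiagrams

open Equiv.Perm

variable {n : ℕ}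

theorem degree_astw {R : Type*} [AddCommMonoid R] (v : BD n →₀ R)
    (w : Equiv.Perm (Fin (2 * n))) :
    (astw v w).degree = v.degree :=
  Finsupp.degree_mapDomain _ _

theorem degree_astMA {R : Type*} [CommRing R] (v : BD n →₀ R)
    (z : MonoidAlgebra R (Equiv.Perm (Fin (2 * n)))) :
    (astMA v z).degree = z.coeff.degree * v.degree := by
  rw [astMA, Finsupp.sum, map_sum, Finsupp.degree_apply z.coeff, Finset.sum_mul]
  refine Finset.sum_congr rfl fun w _ => ?_
  rw [← degree_astw v w]
  simp only [Finsupp.degree_eq_sum, Finsupp.smul_apply, smul_eq_mul, Finset.mul_sum]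

theorem degree_indSum {R : Type*} [CommRing R] (P : BD n → Prop) :
    (indSum R P).degree = Nat.card {D // P D} := by
  classical
  rw [indSum, map_sum, Nat.card_eq_fintype_card, Fintype.card_subtype, Finset.card_filter]
  push_cast
  refine Finset.sum_congr rfl fun D _ => ?_
  split_ifs <;> simp

theorem psum_of_two_parts {lam : ℕ → ℕ} (hzero : ∀ k, 2 ≤ k → lam k = 0) (i : ℕ) :
    psum lam i = if i = 0 then 0 else if i = 1 then lam 0 else lam 0 + lam 1 := by
  induction i with
  | zero => rfl
  | succ i ih =>
    rw [psum, Finset.sum_range_succ, ← psum, ih]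
    rcases i with _ | _ | i <;> simp [hzero]

theorem preservesBlocks_iff_of_two_parts {lam : ℕ → ℕ} (hsum : lam 0 + lam 1 = 2 * n)
    (hzero : ∀ k, 2 ≤ k → lam k = 0) (D : BD n) :
    PreservesBlocks n lam D ↔ ∀ p, ((D.1 p : ℕ) < lam 0 ↔ (p : ℕ) < lam 0) := by
  simp only [PreservesBlocks, psum_of_two_parts hzero]
  refine ⟨fun h p => ?_, fun h p i => ?_⟩
  · have h0 := h p 0
    have h1 := h p 1
    simp only [Nat.reduceAdd, Nat.reduceEqDiff, ↓reduceIte] at h0 h1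
    omega
  · have hp := h p
    have := (D.1 p).isLt
    split_ifs <;> omega

theorem card_preservesBlocks_of_two_parts {lam : ℕ → ℕ} {a b : ℕ} (ha : lam 0 = 2 * a)
    (hb : lam 1 = 2 * b) (hab : a + b = n) (hzero : ∀ k, 2 ≤ k → lam k = 0) :
    Nat.card {D : BD n // PreservesBlocks n lam D} = (2 * a - 1)‼ * (2 * b - 1)‼ := by
  have hsum : lam 0 + lam 1 = 2 * n := by omega
  have card_lt : Nat.card {x : Fin (2 * n) // (x : ℕ) < 2 * a} = 2 * a := by
    rw [Nat.card_eq_fintype_card, Fintype.card_fin_lt_of_le (by omega)]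
  have card_ge : Nat.card {x : Fin (2 * n) // ¬(x : ℕ) < 2 * a} = 2 * b := by
    classical
    rw [Nat.card_eq_fintype_card, Fintype.card_subtype_compl, Fintype.card_fin,
      Fintype.card_fin_lt_of_le (by omega)]
    omega
  calc Nat.card {D : BD n // PreservesBlocks n lam D}
      = Nat.card {f : Equiv.Perm (Fin (2 * n)) //
          IsFixedPointFreeInvolution f ∧ ∀ x, ((f x : ℕ) < 2 * a ↔ (x : ℕ) < 2 * a)} := by
        rw [← ha]
        exact Nat.card_congr <| (Equiv.subtypeEquivRight
          (preservesBlocks_iff_of_two_parts hsum hzero)).trans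
            (Equiv.subtypeSubtypeEquivSubtypeInter IsFixedPointFreeInvolution
              fun f : Equiv.Perm (Fin (2 * n)) =>
                ∀ x, ((f x : ℕ) < lam 0 ↔ (x : ℕ) < lam 0))
    _ = (2 * a - 1)‼ * (2 * b - 1)‼ := by
      rw [card_isFixedPointFreeInvolution_and_preserves fun x : Fin (2 * n) => (x : ℕ) < 2 * a,
        card_isFixedPointFreeInvolution card_lt,
        card_isFixedPointFreeInvolution card_ge]

theorem degree_Xelt_of_two_parts {R : Type*} [CommRing R] {lam : ℕ → ℕ} {a b : ℕ}
    (ha : lam 0 = 2 * a) (hb : lam 1 = 2 * b) (hab : a + b = n)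
    (hzero : ∀ k, 2 ≤ k → lam k = 0) :
    (Xelt R n lam).degree = ((2 * a - 1)‼ * (2 * b - 1)‼ : ℕ) := by
  rw [Xelt, degree_indSum, card_preservesBlocks_of_two_parts ha hb hab hzero]

end BrauerDiagrams

/-- For `n = 4`, the element `X_{(6,2)}` of `B_{4,ℤ}` does not lie in the
right `ℤ[S_8]`-submodule generated by `X_{(4,4)}`. -/
theorem X62_not_in_X44_module :
    ∀ z : MonoidAlgebra ℤ (Equiv.Perm (Fin (2*4))),
      astMA (Xelt ℤ 4 (fun i => if i < 2 then 4 else 0)) z ≠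
        Xelt ℤ 4 (fun i => if i = 0 then 6 else if i = 1 then 2 else 0) := by
  intro z h
  have h44 : (Xelt ℤ 4 (fun i => if i < 2 then 4 else 0)).degree =
      ((2 * 2 - 1)‼ * (2 * 2 - 1)‼ : ℕ) :=
    degree_Xelt_of_two_parts rfl rfl rfl fun k hk => if_neg (by omega)
  have h62 : (Xelt ℤ 4 (fun i => if i = 0 then 6 else if i = 1 then 2 else 0)).degree =
      ((2 * 3 - 1)‼ * (2 * 1 - 1)‼ : ℕ) :=
    degree_Xelt_of_two_parts rfl rfl rfl fun k hk => by
      simp only [show k ≠ 0 by omega, show k ≠ 1 by omega, if_false]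
  have hdeg := congrArg Finsupp.degree h
  rw [degree_astMA, h44, h62] at hdeg
  norm_num [Nat.doubleFactorial] at hdeg
  omega
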